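/- arXiv:1809.08594 — 2 statements merged into one kernel-verified Lean document; each statement's English description precedes it below -/
import Mathlib

section
/- Let L₇ be the real symmetric 7×7 matrix with rows (6,1,1,−1,1,−1,1), (1,6,1,1,−1,1,1), (1,1,6,1,1,−1,−1), (−1,1,1,6,1,1,−1), (1,−1,1,1,6,1,1), (−1,1,−1,1,1,6,1), (1,1,−1,−1,1,1,6). Then the sum of the 4 largest eigenvalues of L₇ (counted with multiplicity) is strictly greater than 32. Equivalently, there exist 4 distinct indices i₁, i₂, i₃, i₄ ∈ {1, …, 7} such that the corresponding eigenvalues of L₇ sum to more than 32. -/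
/-!
`L₇` is annihilated by `(X - 7)(X² - 12X + 31)(X² - 11X + 20)` (for the signed adjacency matrix
`L₇ - 6` this is `(x - 1)(x² - 5)(x² + x - 10)`), so every eigenvalue of `L₇` is one of
`7, 6 ± √5, (11 ± √41)/2`. The trace `42` then fixes the multiplicities: as `√5`, `√41` and
`√205` are irrational, conjugate roots occur equally often, and the remaining integer equation
leaves only the multiplicities `1, 2, 1, 2, 1`. The four eigenvalues above 6 therefore sum to
`7 + 2(6 + √5) + (11 + √41)/2 ≈ 32.17`.
-/

open Polynomial Matrix Finset

theorem spectrum.isRoot_of_aeval_eq_zero {𝕜 A : Type*} [Field 𝕜] [Ring A] [Nontrivial A]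
    [Algebra 𝕜 A] {a : A} {p : 𝕜[X]} (hp : aeval a p = 0) {k : 𝕜} (hk : k ∈ spectrum 𝕜 a) :
    p.IsRoot k := by
  have := spectrum.subset_polynomial_aeval a p ⟨k, hk, rfl⟩
  rwa [hp, spectrum.zero_eq, Set.mem_singleton_iff] at this

theorem Matrix.IsHermitian.isRoot_eigenvalues_of_aeval_eq_zero {𝕜 n : Type*} [RCLike 𝕜]
    [Fintype n] [DecidableEq n] {A : Matrix n n 𝕜} (hA : A.IsHermitian) {p : ℝ[X]}
    (hp : aeval A p = 0) (i : n) : p.IsRoot (hA.eigenvalues i) :=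
  have : Nonempty n := ⟨i⟩
  spectrum.isRoot_of_aeval_eq_zero hp (hA.eigenvalues_mem_spectrum_real i)

def signedLaplacianK7 (R : Type*) [Ring R] : Matrix (Fin 7) (Fin 7) R :=
  !![6, 1, 1, -1, 1, -1, 1;
     1, 6, 1, 1, -1, 1, 1;
     1, 1, 6, 1, 1, -1, -1;
     -1, 1, 1, 6, 1, 1, -1;
     1, -1, 1, 1, 6, 1, 1;
     -1, 1, -1, 1, 1, 6, 1;
     1, 1, -1, -1, 1, 1, 6]

noncomputable def signedLaplacianK7Poly (R : Type*) [CommRing R] : R[X] :=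
  (X - 7) * (X ^ 2 - 12 * X + 31) * (X ^ 2 - 11 * X + 20)

theorem map_signedLaplacianK7 {R S : Type*} [Ring R] [Ring S] (f : R →+* S) :
    (signedLaplacianK7 R).map f = signedLaplacianK7 S := by
  ext i j
  fin_cases i <;> fin_cases j <;> simp [signedLaplacianK7, map_ofNat f]

theorem aeval_signedLaplacianK7Poly (R : Type*) [CommRing R] :
    aeval (signedLaplacianK7 R) (signedLaplacianK7Poly R) = 0 := by
  simp only [signedLaplacianK7Poly, map_mul, map_sub, map_add, map_pow, aeval_X, map_ofNat]
  rw [← map_signedLaplacianK7 (Int.castRingHom R), ← RingHom.mapMatrix_apply]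
  -- the identity is pushed forward from `ℤ`, where `decide` can evaluate it
  have hℤ : (signedLaplacianK7 ℤ - 7) * (signedLaplacianK7 ℤ ^ 2 - 12 * signedLaplacianK7 ℤ + 31) *
      (signedLaplacianK7 ℤ ^ 2 - 11 * signedLaplacianK7 ℤ + 20) = 0 := by
    decide
  simpa only [map_mul, map_sub, map_add, map_pow, map_ofNat, map_zero] using
    congrArg (Int.castRingHom R).mapMatrix hℤ

theorem trace_signedLaplacianK7 (R : Type*) [Ring R] : (signedLaplacianK7 R).trace = 42 := by
  norm_num [signedLaplacianK7, trace, Fin.sum_univ_succ]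

theorem eq_zero_of_intCast_mul_sqrt_add_intCast_mul_sqrt_eq_intCast {p q : ℕ}
    (hp : Irrational √p) (hq : Irrational √q) (hpq : Irrational (√p * √q)) {x y m : ℤ}
    (h : x * √p + y * √q = m) : x = 0 ∧ y = 0 := by
  by_cases hx : x = 0
  · subst hx
    refine ⟨rfl, by_contra fun hy => (hq.intCast_mul hy).ne_int m ?_⟩
    simpa using h
  by_cases hy : y = 0
  · subst hy
    exact absurd (by simpa using h) ((hp.intCast_mul hx).ne_int m)
  -- squaring leaves `√p * √q` as the only irrational term
  have hsq :
      ((p * x ^ 2 + q * y ^ 2 : ℤ) : ℝ) + ((2 * x * y : ℤ) : ℝ) * (√p * √q) = (m ^ 2 : ℤ) := by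
    push_cast
    rw [← h]
    linear_combination (-x ^ 2 : ℝ) * Real.sq_sqrt (Nat.cast_nonneg p) -
      (y ^ 2 : ℝ) * Real.sq_sqrt (Nat.cast_nonneg q)
  exact (((hpq.intCast_mul (by positivity)).intCast_add _).ne_int _ hsq).elim

noncomputable def signedLaplacianK7Roots : Fin 5 → ℝ :=
  ![(11 - √41) / 2, 6 - √5, 7, 6 + √5, (11 + √41) / 2]

theorem exists_eq_signedLaplacianK7Roots {t : ℝ} (ht : (signedLaplacianK7Poly ℝ).IsRoot t) :
    ∃ j, t = signedLaplacianK7Roots j := by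
  simp only [signedLaplacianK7Poly, IsRoot, eval_mul, eval_sub, eval_add, eval_pow, eval_X,
    eval_ofNat, mul_eq_zero] at ht
  rcases ht with (ht | ht) | ht
  · exact ⟨2, (by linarith : t = 7)⟩
  · have : (t - 6) ^ 2 = √5 ^ 2 := by
      rw [Real.sq_sqrt (by norm_num)]; linear_combination ht
    rcases sq_eq_sq_iff_eq_or_eq_neg.1 this with h | h
    · exact ⟨3, (by linarith : t = 6 + √5)⟩
    · exact ⟨1, (by linarith : t = 6 - √5)⟩
  · have : (2 * t - 11) ^ 2 = √41 ^ 2 := by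
      rw [Real.sq_sqrt (by norm_num)]; linear_combination 4 * ht
    rcases sq_eq_sq_iff_eq_or_eq_neg.1 this with h | h
    · exact ⟨4, (by linarith : t = (11 + √41) / 2)⟩
    · exact ⟨0, (by linarith : t = (11 - √41) / 2)⟩

theorem signedLaplacianK7_multiplicities {n : Fin 5 → ℕ} (hcard : ∑ j, n j = 7)
    (htrace : ∑ j, n j * signedLaplacianK7Roots j = 42) : n = ![1, 2, 1, 2, 1] := by
  simp only [Fin.sum_univ_five] at hcard htrace
  simp only [signedLaplacianK7Roots, cons_val_zero, cons_val_one, Matrix.cons_val] at htrace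
  have h41 : Irrational √41 := by norm_num [irrational_sqrt_ofNat_iff]
  have h5 : Irrational √5 := by norm_num [irrational_sqrt_ofNat_iff]
  have h205 : Irrational (√41 * √5) := by
    rw [← Real.sqrt_mul (by norm_num)]
    norm_num [irrational_sqrt_ofNat_iff]
  have hlin : ((n 4 - n 0 : ℤ) : ℝ) * √(41 : ℕ) + ((2 * (n 3 - n 1) : ℤ) : ℝ) * √(5 : ℕ) =
      ((84 - 11 * (n 0 + n 4) - 12 * (n 1 + n 3) - 14 * n 2 : ℤ) : ℝ) := by
    push_cast
    linear_combination 2 * htrace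
  obtain ⟨h04, h13⟩ := eq_zero_of_intCast_mul_sqrt_add_intCast_mul_sqrt_eq_intCast
    (by simpa using h41) (by simpa using h5) (by simpa using h205) hlin
  have h4 : n 4 = n 0 := by omega
  have h3 : n 3 = n 1 := by omega
  have hrational : 11 * n 0 + 12 * n 1 + 7 * n 2 = 42 := by
    rw [h4, h3] at htrace
    exact_mod_cast (by linear_combination htrace : (11 * n 0 + 12 * n 1 + 7 * n 2 : ℝ) = 42)
  funext j
  fin_cases j <;> simp <;> omega

theorem Fintype.sum_comp_eq_sum_card_nsmul {ι κ M : Type*} [Fintype ι] [Fintype κ]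
    [DecidableEq κ] [AddCommMonoid M] (k : ι → κ) (g : κ → M) :
    ∑ i, g (k i) = ∑ j, #{i | k i = j} • g j := by
  simp_rw [← Finset.sum_fiberwise' univ k g, sum_const]

theorem exists_card_eq_four_lt_sum_of_forall_eq_signedLaplacianK7Roots {ι : Type*} [Fintype ι]
    (hι : Fintype.card ι = 7) {f : ι → ℝ} (hf : ∀ i, ∃ j, f i = signedLaplacianK7Roots j)
    (hsum : ∑ i, f i = 42) : ∃ s : Finset ι, #s = 4 ∧ 32 < ∑ i ∈ s, f i := by
  choose k hk using hf
  have hn : ∀ j, #{i | k i = j} = ![1, 2, 1, 2, 1] j := by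
    refine congrFun (signedLaplacianK7_multiplicities (n := fun j => #{i | k i = j}) ?_ ?_)
    · simpa [hι] using (Fintype.sum_comp_eq_sum_card_nsmul k fun _ => (1 : ℕ)).symm
    · simpa [hk, Fintype.sum_comp_eq_sum_card_nsmul k] using hsum
  have h5 : 2.2 < √5 := Real.lt_sqrt (by norm_num) |>.2 (by norm_num)
  have h41 : 6.4 < √41 := Real.lt_sqrt (by norm_num) |>.2 (by norm_num)
  refine ⟨({i | 2 ≤ k i} : Finset ι), ?_, ?_⟩
  · rw [card_filter, Fintype.sum_comp_eq_sum_card_nsmul k (fun j => if 2 ≤ j then 1 else 0)]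
    simp [Fin.sum_univ_five, hn]
  · have hsum_top : ∑ i ∈ {i | 2 ≤ k i}, f i = 7 + 2 * (6 + √5) + (11 + √41) / 2 := by
      simp_rw [sum_filter, hk]
      rw [Fintype.sum_comp_eq_sum_card_nsmul k
        fun j => if 2 ≤ j then signedLaplacianK7Roots j else 0]
      simp [Fin.sum_univ_five, signedLaplacianK7Roots, hn]
    linarith

/-- For the signed Laplacian `L₇` of a signing of `K₇`, the sum of the 4 largest
eigenvalues exceeds `32 = e(K₇) + (5 choose 2) + 1`: equivalently, some 4
eigenvalues (with multiplicity, i.e. 4 distinct indices) sum to more than 32. -/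
theorem sum_four_largest_eigenvalues_L7_gt_32
    (hL : (!![6, 1, 1, -1, 1, -1, 1;
              1, 6, 1, 1, -1, 1, 1;
              1, 1, 6, 1, 1, -1, -1;
              -1, 1, 1, 6, 1, 1, -1;
              1, -1, 1, 1, 6, 1, 1;
              -1, 1, -1, 1, 1, 6, 1;
              1, 1, -1, -1, 1, 1, 6] : Matrix (Fin 7) (Fin 7) ℝ).IsHermitian) :
    ∃ s : Finset (Fin 7), s.card = 4 ∧ 32 < ∑ i ∈ s, hL.eigenvalues i := by
  have hroots (i : Fin 7) : ∃ j, hL.eigenvalues i = signedLaplacianK7Roots j :=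
    exists_eq_signedLaplacianK7Roots
      (hL.isRoot_eigenvalues_of_aeval_eq_zero (aeval_signedLaplacianK7Poly ℝ) i)
  have htrace : ∑ i, hL.eigenvalues i = 42 := by
    simpa using (hL.trace_eq_sum_eigenvalues.symm.trans (trace_signedLaplacianK7 ℝ))
  exact exists_card_eq_four_lt_sum_of_forall_eq_signedLaplacianK7Roots (Fintype.card_fin 7)
    hroots htrace
end

section
/- Let L₈ be the real symmetric 8×8 matrix with rows (7,1,1,1,−1,1,1,1), (1,7,1,1,1,−1,−1,1), (1,1,7,1,1,−1,1,−1), (1,1,1,7,1,1,−1,−1), (−1,1,1,1,7,1,1,1), (1,−1,−1,1,1,7,1,1), (1,−1,1,−1,1,1,7,1), (1,1,−1,−1,1,1,1,7). Then the sum of the 5 largest eigenvalues of L₈ (counted with multiplicity) equals 41 + √13 (approximately 44.6056). -/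
/-!
`L8` is annihilated by `(X ^ 2 - 14 X + 36) (X - 10) (X - 8) (X - 4)`, so each eigenvalue is one of
`7 + √13, 10, 8, 4, 7 - √13`. Counting multiplicities, the equations `tr L8 = 56` and
`tr (L8 ^ 2) = 448`, together with the irrationality of `√13`, leave only `1, 1, 3, 2, 1`. Hence
exactly five eigenvalues are at least `8`, and a decreasing arrangement lists them first.
-/

open Finset Polynomial Function

namespace Matrix.IsHermitian

variable {𝕜 n : Type*} [RCLike 𝕜] [Fintype n] [DecidableEq n] {A : Matrix n n 𝕜}

theorem trace_pow_eq_sum_eigenvalues_pow (hA : A.IsHermitian) (k : ℕ) :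
    (A ^ k).trace = ∑ i, (hA.eigenvalues i : 𝕜) ^ k := by
  conv_lhs => rw [hA.spectral_theorem]
  rw [← map_pow, Unitary.conjStarAlgAut_apply, trace_mul_cycle, Unitary.coe_star_mul_self,
    one_mul, diagonal_pow, trace_diagonal]
  simp

theorem eval_eigenvalues_eq_zero (hA : A.IsHermitian) {p : ℝ[X]} (hp : aeval A p = 0) (i : n) :
    p.eval (hA.eigenvalues i) = 0 := by
  have : Nonempty n := ⟨i⟩
  simpa [hp, spectrum.zero_eq] using
    spectrum.subset_polynomial_aeval A p ⟨_, hA.eigenvalues_mem_spectrum_real i, rfl⟩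

end Matrix.IsHermitian

theorem Finset.sum_comp_eq_sum_card_fiber {ι κ α M : Type*} [Fintype ι] [Fintype κ]
    [DecidableEq κ] [DecidableEq α] [AddCommMonoid M] {g : ι → α} {r : κ → α}
    (hr : Injective r) (hg : ∀ i, g i ∈ Set.range r) (φ : α → M) :
    ∑ i, φ (g i) = ∑ k, #{i | g i = r k} • φ (r k) := by
  choose c hc using hg
  rw [← sum_fiberwise univ c]
  refine sum_congr rfl fun k _ => ?_
  have hfiber : ({i | g i = r k} : Finset ι) = ({i | c i = k} : Finset ι) := by
    ext i
    simp [← hc, hr.eq_iff]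
  rw [hfiber]
  exact sum_eq_card_nsmul fun i hi => by rw [← hc, (mem_filter.mp hi).2]

theorem Antitone.filter_le_eq_filter_lt_card {n : ℕ} {α : Type*} [LinearOrder α]
    {g : Fin n → α} (hg : Antitone g) (t : α) :
    ({i | t ≤ g i} : Finset (Fin n)) = ({i | (i : ℕ) < #{i | t ≤ g i}} : Finset (Fin n)) := by
  ext i
  simp only [mem_filter, mem_univ, true_and]
  constructor
  · intro hi
    have : Iic i ⊆ ({j | t ≤ g j} : Finset (Fin n)) := fun j hj => by
      simpa using hi.trans (hg (mem_Iic.mp hj))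
    simpa using card_le_card this
  · intro hi
    by_contra hti
    have : ({j | t ≤ g j} : Finset (Fin n)) ⊆ Iio i := fun j hj => by
      simp only [mem_filter, mem_univ, true_and] at hj
      exact mem_Iio.mpr (lt_of_not_ge fun hij => hti (hj.trans (hg hij)))
    have := card_le_card this
    rw [Fin.card_Iio] at this
    omega

def L8Int : Matrix (Fin 8) (Fin 8) ℤ :=
  !![7, 1, 1, 1, -1, 1, 1, 1;
     1, 7, 1, 1, 1, -1, -1, 1;
     1, 1, 7, 1, 1, -1, 1, -1;
     1, 1, 1, 7, 1, 1, -1, -1;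
     -1, 1, 1, 1, 7, 1, 1, 1;
     1, -1, -1, 1, 1, 7, 1, 1;
     1, -1, 1, -1, 1, 1, 7, 1;
     1, 1, -1, -1, 1, 1, 1, 7]

noncomputable def L8 : Matrix (Fin 8) (Fin 8) ℝ :=
  !![7, 1, 1, 1, -1, 1, 1, 1;
     1, 7, 1, 1, 1, -1, -1, 1;
     1, 1, 7, 1, 1, -1, 1, -1;
     1, 1, 1, 7, 1, 1, -1, -1;
     -1, 1, 1, 1, 7, 1, 1, 1;
     1, -1, -1, 1, 1, 7, 1, 1;
     1, -1, 1, -1, 1, 1, 7, 1;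
     1, 1, -1, -1, 1, 1, 1, 7]

-- The integer copy `L8Int` is there so that identities between explicit matrices can be
-- checked by `decide` and then transported to `ℝ`.
theorem L8_eq_map : L8 = (Int.castRingHom ℝ).mapMatrix L8Int := by
  ext i j
  fin_cases i <;> fin_cases j <;> simp [L8, L8Int]

theorem trace_L8_pow (k : ℕ) : (L8 ^ k).trace = (L8Int ^ k).trace := by
  rw [L8_eq_map, ← map_pow, RingHom.mapMatrix_apply, ← AddMonoidHom.map_trace]
  rfl

theorem trace_L8 : L8.trace = 56 := by
  rw [← pow_one L8, trace_L8_pow]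
  exact_mod_cast (by decide : (L8Int ^ 1).trace = 56)

theorem trace_L8_sq : (L8 ^ 2).trace = 448 := by
  rw [trace_L8_pow]
  exact_mod_cast (by decide : (L8Int ^ 2).trace = 448)

-- the minimal polynomial of `L8`
noncomputable def annihilatorL8 : ℝ[X] := (X ^ 2 - 14 * X + 36) * (X - 10) * (X - 8) * (X - 4)

theorem aeval_annihilatorL8 : aeval L8 annihilatorL8 = 0 := by
  have h : (L8Int ^ 2 - 14 * L8Int + 36) * (L8Int - 10) * (L8Int - 8) * (L8Int - 4) = 0 := by
    decide
  replace h := congrArg (Int.castRingHom ℝ).mapMatrix h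
  simp only [map_mul, map_sub, map_add, map_pow, map_ofNat, map_zero] at h
  simpa only [annihilatorL8, L8_eq_map, map_mul, map_sub, map_add, map_pow, aeval_X, map_ofNat]
    using h

noncomputable def rootL8 : Fin 5 → ℝ := ![7 + √13, 10, 8, 4, 7 - √13]

theorem injective_rootL8 : Injective rootL8 := by
  have h3 : 3 < √13 := Real.lt_sqrt_of_sq_lt (by norm_num)
  have h4 : √13 < 4 := (Real.sqrt_lt' (by norm_num)).mpr (by norm_num)
  intro a b hab
  fin_cases a <;> fin_cases b <;> simp [rootL8] at hab ⊢ <;> linarith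

theorem mem_range_rootL8 {x : ℝ} (hx : annihilatorL8.eval x = 0) : x ∈ Set.range rootL8 := by
  have hquad : x ^ 2 - 14 * x + 36 = (x - (7 + √13)) * (x - (7 - √13)) := by
    linear_combination Real.sq_sqrt (by norm_num : (0 : ℝ) ≤ 13)
  simp only [annihilatorL8, eval_mul, eval_sub, eval_add, eval_pow, eval_X, eval_ofNat, hquad,
    mul_eq_zero, sub_eq_zero] at hx
  rcases hx with (((h | h) | h) | h) | h
  exacts [⟨0, h.symm⟩, ⟨4, h.symm⟩, ⟨1, h.symm⟩, ⟨2, h.symm⟩, ⟨3, h.symm⟩]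

theorem sum_comp_eq_of_sum_eq_of_sum_sq_eq {g : Fin 8 → ℝ}
    (hg : ∀ i, g i ∈ Set.range rootL8) (hsum : ∑ i, g i = 56) (hsum_sq : ∑ i, g i ^ 2 = 448)
    {M : Type*} [AddCommMonoid M] (φ : ℝ → M) :
    ∑ i, φ (g i) = φ (7 + √13) + φ 10 + 3 • φ 8 + 2 • φ 4 + φ (7 - √13) := by
  have hfiber (ψ : ℝ → ℝ) :=
    (sum_comp_eq_sum_card_fiber injective_rootL8 hg ψ).trans (Fin.sum_univ_five _)
  have hcard := (hfiber fun _ => 1).symm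
  have hlin := (hfiber id).symm.trans hsum
  have hquad := (hfiber (· ^ 2)).symm.trans hsum_sq
  rw [sum_comp_eq_sum_card_fiber injective_rootL8 hg, Fin.sum_univ_five]
  generalize #{i | g i = rootL8 0} = a, #{i | g i = rootL8 1} = b,
    #{i | g i = rootL8 2} = c, #{i | g i = rootL8 3} = d,
    #{i | g i = rootL8 4} = e at hcard hlin hquad ⊢
  simp only [rootL8, Matrix.cons_val, nsmul_eq_mul, mul_one, id, sum_const, card_univ,
    Fintype.card_fin] at hcard hlin hquad ⊢
  have hs : √13 ^ 2 = 13 := Real.sq_sqrt (by norm_num)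
  obtain rfl : a = e := by
    by_contra hne
    have hirr : Irrational (((a : ℤ) - e : ℤ) * √13) :=
      Irrational.intCast_mul (by norm_num) (by omega)
    exact hirr.ne_int (56 - 7 * a - 10 * b - 8 * c - 4 * d - 7 * e)
      (by push_cast; linear_combination hlin)
  have hcard' : a + b + c + d + a = 8 := by exact_mod_cast hcard
  have hlin' : 14 * a + 10 * b + 8 * c + 4 * d = 56 := by
    exact_mod_cast (by linear_combination hlin : (14 * a + 10 * b + 8 * c + 4 * d : ℝ) = 56)
  have hquad' : 124 * a + 100 * b + 64 * c + 16 * d = 448 := by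
    exact_mod_cast (by linear_combination hquad - 2 * a * hs :
      (124 * a + 100 * b + 64 * c + 16 * d : ℝ) = 448)
  obtain ⟨rfl, rfl, rfl, rfl⟩ : a = 1 ∧ b = 1 ∧ c = 3 ∧ d = 2 := by omega
  simp

/-- The sum of the 5 largest eigenvalues of the signed Laplacian `L₈` (counted
with multiplicity) equals `41 + √13`: for any permutation arranging the
eigenvalues in (weakly) decreasing order, the first 5 sum to that value. -/
theorem sum_five_largest_eigenvalues_L8_eq
    (hL : (!![7, 1, 1, 1, -1, 1, 1, 1;
              1, 7, 1, 1, 1, -1, -1, 1;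
              1, 1, 7, 1, 1, -1, 1, -1;
              1, 1, 1, 7, 1, 1, -1, -1;
              -1, 1, 1, 1, 7, 1, 1, 1;
              1, -1, -1, 1, 1, 7, 1, 1;
              1, -1, 1, -1, 1, 1, 7, 1;
              1, 1, -1, -1, 1, 1, 1, 7] : Matrix (Fin 8) (Fin 8) ℝ).IsHermitian) :
    ∀ σ : Equiv.Perm (Fin 8), Antitone (fun i => hL.eigenvalues (σ i)) →
      ∑ i ∈ Finset.univ.filter (fun i : Fin 8 => (i : ℕ) < 5), hL.eigenvalues (σ i)
        = 41 + Real.sqrt 13 := by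
  intro σ hσ
  have hpow (k : ℕ) : ∑ i, hL.eigenvalues (σ i) ^ k = (L8 ^ k).trace := by
    rw [Equiv.sum_comp σ (hL.eigenvalues · ^ k)]
    exact (hL.trace_pow_eq_sum_eigenvalues_pow k).symm
  have hroot (i : Fin 8) : hL.eigenvalues (σ i) ∈ Set.range rootL8 :=
    mem_range_rootL8 (hL.eval_eigenvalues_eq_zero aeval_annihilatorL8 (σ i))
  have hsum : ∑ i, hL.eigenvalues (σ i) = 56 := by simpa [trace_L8] using hpow 1
  have hsum_sq : ∑ i, hL.eigenvalues (σ i) ^ 2 = 448 := trace_L8_sq ▸ hpow 2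
  have hsqrt : 1 ≤ √13 := Real.one_le_sqrt.mpr (by norm_num)
  have hcard : #{i | 8 ≤ hL.eigenvalues (σ i)} = 5 := by
    rw [card_filter,
      sum_comp_eq_of_sum_eq_of_sum_sq_eq hroot hsum hsum_sq (if 8 ≤ · then 1 else 0)]
    norm_num [show 8 ≤ 7 + √13 by linarith, show ¬8 ≤ 7 - √13 by linarith]
  have htop :
      ({i | (i : ℕ) < 5} : Finset (Fin 8)) = ({i | 8 ≤ hL.eigenvalues (σ i)} : Finset _) := by
    rw [hσ.filter_le_eq_filter_lt_card, hcard]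
  rw [htop, sum_filter,
    sum_comp_eq_of_sum_eq_of_sum_sq_eq hroot hsum hsum_sq (fun x => if 8 ≤ x then x else 0)]
  norm_num [show 8 ≤ 7 + √13 by linarith, show ¬8 ≤ 7 - √13 by linarith]
  ring
end
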